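/- m-machine feasibility characterization: let m ≥ 3 and let E = {J_1,…,J_{k'}} be a set of jobs of an m-machine JIT flow-shop instance whose due dates are pairwise distinct and numbered so that d_1 < d_2 < … < d_{k'}, with d_0 = 0. Then E is feasible if and only if both of the following hold: (a) d_{j−1} + p^(m)_j ≤ d_j for every j; and (b) there exist processing orders σ_1, σ_2, …, σ_{m−1} of E with σ_1 = σ_2 such that, scheduling the jobs of E on machines M_1,…,M_{m−1} as soon as possible in these orders (the j-th job of σ_i starts on M_i at the maximum of the completion of the (j−1)-st job of σ_i on M_i and its own completion on M_{i−1}, with machine M_1 starting at time 0), the resulting completion time of each job j on M_{m−1} is at most d_j − p^(m)_j. -/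

import Mathlib

open Finset

/-- A just-in-time flow-shop instance on `m` machines with jobs of type `J`:
`p i j` is the (positive integer) processing time of job `j` on machine `i`,
`d j` its positive integer due date and `w j` its positive integer weight. -/
structure JITInstance (m : ℕ) (J : Type) where
  p : Fin m → J → ℕ
  d : J → ℕ
  w : J → ℕ
  p_pos : ∀ i j, 0 < p i j
  d_pos : ∀ j, 0 < d j
  w_pos : ∀ j, 0 < w j

/-- `S` is a JIT schedule of the job set `E`: on every machine the processing
intervals `(S i j, S i j + p i j]` of distinct jobs of `E` are pairwise disjoint,
each job's operation on machine `i+1` starts no earlier than its completion on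
machine `i`, and every job of `E` completes on the last machine exactly at its
due date.  (Start times are nonnegative automatically, being naturals.) -/
def IsJITSchedule {m : ℕ} {J : Type} (I : JITInstance m J)
    (E : Finset J) (S : Fin m → J → ℕ) : Prop :=
  (∀ i : Fin m, ∀ j ∈ E, ∀ j' ∈ E, j ≠ j' →
      S i j + I.p i j ≤ S i j' ∨ S i j' + I.p i j' ≤ S i j) ∧
  (∀ j ∈ E, ∀ i i' : Fin m, i'.val = i.val + 1 →
      S i j + I.p i j ≤ S i' j) ∧
  (∀ j ∈ E, ∀ i : Fin m, i.val = m - 1 →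
      S i j + I.p i j = I.d j)

/-- A job set is feasible if it admits a JIT schedule. -/
def Feasible {m : ℕ} {J : Type} (I : JITInstance m J) (E : Finset J) : Prop :=
  ∃ S : Fin m → J → ℕ, IsJITSchedule I E S

/-- Completion times on a single machine when the jobs are scheduled as soon as
possible in the order given by the list `L`, where `prev j` is the completion
time of job `j` on the previous machine: each job completes at
`max (completion of its predecessor on this machine) (prev j) + (its processing time)`. -/
def machineCompl {J : Type} [DecidableEq J] (pt : J → ℕ) (prev : J → ℕ)
    (L : List J) : J → ℕ :=
  (L.foldl (fun acc j =>
      let c := max acc.1 (prev j) + pt j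
      (c, Function.update acc.2 j c)) ((0 : ℕ), fun _ => (0 : ℕ))).2

/-- Completion times on machines `0, …, i` when jobs are scheduled as soon as
possible, machine `i` processing the jobs in the order `L i`. -/
def asapCompl {J : Type} [DecidableEq J] (pt : ℕ → J → ℕ) (L : ℕ → List J) :
    ℕ → J → ℕ
  | 0 => machineCompl (pt 0) (fun _ => 0) (L 0)
  | (i + 1) => machineCompl (pt (i + 1)) (asapCompl pt L i) (L (i + 1))

/-!
Given a JIT schedule `S`, let every machine `M_i` with `i ≥ 2` process the jobs in its order in
`S`, and `M_1` in the order of `M_2`. By induction along the machines, scheduling as soon as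
possible in these orders completes each job no later than `S` does. On `M_1`, whose order may
differ from that of `S`, the jobs run back to back, and every job preceding `j` must be finished
on `M_1` before `j` starts on `M_2` in `S`; the disjointness of their intervals in `S` bounds
their total length. On the last machine the intervals `(d_j - pᵐ_j, d_j]` are forced, and they
are disjoint exactly when condition (a) holds. Conversely, the as-soon-as-possible schedule on
`M_1, …, M_{m-1}` followed by these intervals is a JIT schedule.
-/

section SingleMachine

variable {J : Type} [DecidableEq J] (pt prev : J → ℕ)

def asapStep (acc : ℕ × (J → ℕ)) (j : J) : ℕ × (J → ℕ) :=
  (max acc.1 (prev j) + pt j, Function.update acc.2 j (max acc.1 (prev j) + pt j))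

theorem machineCompl_eq_foldl (L : List J) :
    machineCompl pt prev L = (L.foldl (asapStep pt prev) (0, fun _ => 0)).2 := rfl

theorem foldl_asapStep_of_not_mem {j : J} :
    ∀ {L : List J}, j ∉ L → ∀ t f, (L.foldl (asapStep pt prev) (t, f)).2 j = f j
  | [], _, _, _ => rfl
  | h :: T, hj, t, f => by
    rw [List.mem_cons, not_or] at hj
    rw [List.foldl_cons, asapStep, foldl_asapStep_of_not_mem hj.2, Function.update_of_ne hj.1]

theorem le_foldl_asapStep {j : J} :
    ∀ {L : List J}, j ∈ L → ∀ t f,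
      max t (prev j) + pt j ≤ (L.foldl (asapStep pt prev) (t, f)).2 j
  | [], hj, _, _ => absurd hj List.not_mem_nil
  | h :: T, hj, t, f => by
    rw [List.foldl_cons, asapStep]
    by_cases hjT : j ∈ T
    · refine le_trans ?_ (le_foldl_asapStep hjT _ _)
      gcongr
      exact (le_max_left _ _).trans (Nat.le_add_right _ _)
    · obtain rfl : j = h := (List.mem_cons.1 hj).resolve_right hjT
      rw [foldl_asapStep_of_not_mem pt prev hjT, Function.update_self]

theorem pairwise_foldl_asapStep :
    ∀ {L : List J}, L.Nodup → ∀ t f,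
      L.Pairwise fun x y => (L.foldl (asapStep pt prev) (t, f)).2 x + pt y ≤
        (L.foldl (asapStep pt prev) (t, f)).2 y
  | [], _, _, _ => List.Pairwise.nil
  | h :: T, hL, t, f => by
    rw [List.nodup_cons] at hL
    simp only [List.foldl_cons, List.pairwise_cons]
    refine ⟨fun y hy => ?_, pairwise_foldl_asapStep hL.2 _ _⟩
    rw [asapStep, foldl_asapStep_of_not_mem pt prev hL.1, Function.update_self]
    exact (Nat.add_le_add_right (le_max_left _ _) _).trans (le_foldl_asapStep pt prev hy _ _)

theorem foldl_asapStep_le (S : J → ℕ) {j : J} :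
    ∀ {L : List J}, (∀ x ∈ L, prev x ≤ S x) →
      L.Pairwise (fun x y => S x + pt x ≤ S y) →
      j ∈ L → ∀ t f, (∀ x ∈ L, t ≤ S x) →
        (L.foldl (asapStep pt prev) (t, f)).2 j ≤ S j + pt j
  | [], _, _, hj, _, _, _ => absurd hj List.not_mem_nil
  | h :: T, hprev, hsorted, hj, t, f, ht => by
    rw [List.pairwise_cons] at hsorted
    have hh : max t (prev h) + pt h ≤ S h + pt h := by
      gcongr
      exact max_le (ht h List.mem_cons_self) (hprev h List.mem_cons_self)
    rw [List.foldl_cons, asapStep]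
    by_cases hjT : j ∈ T
    · exact foldl_asapStep_le S (fun x hx => hprev x (List.mem_cons_of_mem h hx)) hsorted.2
        hjT _ _ fun x hx => hh.trans (hsorted.1 x hx)
    · obtain rfl : j = h := (List.mem_cons.1 hj).resolve_right hjT
      rwa [foldl_asapStep_of_not_mem pt prev hjT, Function.update_self]

theorem foldl_asapStep_zero_fst :
    ∀ (L : List J) t f, (L.foldl (asapStep pt fun _ => 0) (t, f)).1 = t + (L.map pt).sum
  | [], t, f => by simp
  | h :: T, t, f => by
    rw [List.foldl_cons, asapStep, foldl_asapStep_zero_fst T]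
    simp only [zero_le, max_eq_left, List.map_cons, List.sum_cons]
    ring

theorem le_machineCompl {L : List J} {j : J} (hj : j ∈ L) :
    prev j + pt j ≤ machineCompl pt prev L j := by
  rw [machineCompl_eq_foldl]
  simpa using le_foldl_asapStep pt prev hj 0 fun _ => 0

theorem machineCompl_disjoint {L : List J} (hL : L.Nodup) {x y : J} (hx : x ∈ L) (hy : y ∈ L)
    (hxy : x ≠ y) :
    machineCompl pt prev L x + pt y ≤ machineCompl pt prev L y ∨
      machineCompl pt prev L y + pt x ≤ machineCompl pt prev L x := by
  let R x y := machineCompl pt prev L x + pt y ≤ machineCompl pt prev L y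
  have : Std.Symm fun x y => R x y ∨ R y x := ⟨fun _ _ h => h.symm⟩
  have hR : L.Pairwise fun x y => R x y ∨ R y x :=
    (pairwise_foldl_asapStep pt prev hL 0 fun _ => 0).imp Or.inl
  exact hR.forall hx hy hxy

theorem machineCompl_le (S : J → ℕ) {L : List J} (hprev : ∀ x ∈ L, prev x ≤ S x)
    (hsorted : L.Pairwise fun x y => S x + pt x ≤ S y) {j : J} (hj : j ∈ L) :
    machineCompl pt prev L j ≤ S j + pt j :=
  foldl_asapStep_le pt prev S hprev hsorted hj 0 _ fun _ _ => Nat.zero_le _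

theorem machineCompl_append_cons {L₁ L₂ : List J} {j : J} (hj : j ∉ L₂) :
    machineCompl pt (fun _ => 0) (L₁ ++ j :: L₂) j = (L₁.map pt).sum + pt j := by
  rw [machineCompl_eq_foldl, List.foldl_append, List.foldl_cons, asapStep,
    foldl_asapStep_of_not_mem _ _ hj, Function.update_self, foldl_asapStep_zero_fst]
  simp

end SingleMachine

theorem sum_le_of_pairwise_disjoint {ι : Type*} (F : Finset ι) (S p : ι → ℕ) {B : ℕ}
    (hdis : ∀ x ∈ F, ∀ y ∈ F, x ≠ y → S x + p x ≤ S y ∨ S y + p y ≤ S x)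
    (hB : ∀ x ∈ F, S x + p x ≤ B) : ∑ x ∈ F, p x ≤ B := by
  have hdisj : (F : Set ι).PairwiseDisjoint fun x => Ioc (S x) (S x + p x) := by
    intro x hx y hy hxy
    rw [Function.onFun, Ioc_disjoint_Ioc]
    rcases hdis x hx y hy hxy with h | h <;> omega
  calc ∑ x ∈ F, p x = #(F.biUnion fun x => Ioc (S x) (S x + p x)) := by
        simp [card_biUnion hdisj]
    _ ≤ #(Ioc 0 B) :=
        card_le_card (biUnion_subset.2 fun x hx => Ioc_subset_Ioc (Nat.zero_le _) (hB x hx))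
    _ = B := by simp

theorem List.Pairwise.add_le_of_disjoint {J : Type} {L : List J} {S p : J → ℕ}
    (hsorted : L.Pairwise fun x y => S x ≤ S y) (hL : L.Nodup) (hp : ∀ x ∈ L, 0 < p x)
    (hdis : ∀ x ∈ L, ∀ y ∈ L, x ≠ y → S x + p x ≤ S y ∨ S y + p y ≤ S x) :
    L.Pairwise fun x y => S x + p x ≤ S y :=
  (hsorted.and hL).imp_of_mem fun hx hy ⟨hle, hne⟩ =>
    (hdis _ hx _ hy hne).resolve_right fun h => by have := hp _ hy; omega

section ASAP

variable {J : Type} [DecidableEq J]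

theorem machineCompl_zero_le (pt S B : J → ℕ) {L : List J} (hL : L.Nodup)
    (hsorted : L.Pairwise fun x y => B x ≤ B y)
    (hdis : ∀ x ∈ L, ∀ y ∈ L, x ≠ y → S x + pt x ≤ S y ∨ S y + pt y ≤ S x)
    (hB : ∀ x ∈ L, S x + pt x ≤ B x) {j : J} (hj : j ∈ L) :
    machineCompl pt (fun _ => 0) L j ≤ B j := by
  obtain ⟨L₁, L₂, rfl⟩ := List.append_of_mem hj
  have hnd := List.nodup_middle.1 hL
  have hprefix : (j :: L₁).Nodup :=
    hnd.sublist (List.Sublist.cons_cons _ (List.sublist_append_left _ _))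
  have hsub : ∀ x ∈ (j :: L₁).toFinset, x ∈ L₁ ++ j :: L₂ := by
    simp only [List.mem_toFinset, List.mem_cons, List.mem_append]
    tauto
  calc machineCompl pt (fun _ => 0) (L₁ ++ j :: L₂) j = (L₁.map pt).sum + pt j :=
        machineCompl_append_cons pt fun h => (List.nodup_cons.1 hnd).1 (List.mem_append_right _ h)
    _ = ∑ x ∈ (j :: L₁).toFinset, pt x := by
        rw [List.sum_toFinset _ hprefix, List.map_cons, List.sum_cons, add_comm]
    _ ≤ B j := by
      refine sum_le_of_pairwise_disjoint _ S pt
        (fun x hx y hy => hdis x (hsub x hx) y (hsub y hy)) fun x hx => ?_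
      rcases List.mem_cons.1 (List.mem_toFinset.1 hx) with rfl | hx
      · exact hB x (hsub x (by simp))
      · exact (hB x (List.mem_append_left _ hx)).trans
          ((List.pairwise_append.1 hsorted).2.2 x hx j List.mem_cons_self)

variable (pt : ℕ → J → ℕ) (L : ℕ → List J)

theorem asapCompl_eq_machineCompl (i : ℕ) :
    ∃ prev, asapCompl pt L i = machineCompl (pt i) prev (L i) := by
  cases i <;> exact ⟨_, rfl⟩

theorem le_asapCompl {i : ℕ} {x : J} (hx : x ∈ L i) : pt i x ≤ asapCompl pt L i x := by
  obtain ⟨prev, h⟩ := asapCompl_eq_machineCompl pt L i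
  exact h ▸ (Nat.le_add_left _ _).trans (le_machineCompl _ prev hx)

theorem asapCompl_disjoint {i : ℕ} (hL : (L i).Nodup) {x y : J} (hx : x ∈ L i) (hy : y ∈ L i)
    (hxy : x ≠ y) :
    asapCompl pt L i x + pt i y ≤ asapCompl pt L i y ∨
      asapCompl pt L i y + pt i x ≤ asapCompl pt L i x := by
  obtain ⟨prev, h⟩ := asapCompl_eq_machineCompl pt L i
  exact h ▸ machineCompl_disjoint _ prev hL hx hy hxy

theorem asapCompl_add_le_succ {i : ℕ} {x : J} (hx : x ∈ L (i + 1)) :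
    asapCompl pt L i x + pt (i + 1) x ≤ asapCompl pt L (i + 1) x :=
  le_machineCompl _ _ hx

theorem asapCompl_le_of_sorted {n : ℕ} {E : Finset J} {S : ℕ → J → ℕ}
    (hpos : ∀ i ≤ n, ∀ x ∈ E, 0 < pt i x)
    (hdis : ∀ i ≤ n, ∀ x ∈ E, ∀ y ∈ E, x ≠ y →
      S i x + pt i x ≤ S i y ∨ S i y + pt i y ≤ S i x)
    (hprec : ∀ i < n, ∀ x ∈ E, S i x + pt i x ≤ S (i + 1) x)
    (hmem : ∀ i, 1 ≤ i → i ≤ n → ∀ x, x ∈ L i ↔ x ∈ E)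
    (hnodup : ∀ i, 1 ≤ i → i ≤ n → (L i).Nodup)
    (hsorted : ∀ i, 1 ≤ i → i ≤ n → (L i).Pairwise fun x y => S i x ≤ S i y)
    (h01 : L 0 = L 1) :
    ∀ i, 1 ≤ i → i ≤ n → ∀ x ∈ E, asapCompl pt L i x ≤ S i x + pt i x := by
  intro i
  induction i with
  | zero => omega
  | succ i ih =>
    intro _ hi x hx
    have hE : ∀ y ∈ L (i + 1), y ∈ E := fun y hy => (hmem _ (by omega) hi y).1 hy
    have hprev : ∀ y ∈ L (i + 1), asapCompl pt L i y ≤ S (i + 1) y := by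
      rcases i with _ | i
      · show ∀ y ∈ L 1, machineCompl (pt 0) (fun _ => 0) (L 0) y ≤ S 1 y
        rw [h01]
        exact fun y hy => machineCompl_zero_le _ (S 0) (S 1) (hnodup 1 le_rfl hi)
          (hsorted 1 le_rfl hi)
          (fun x hx y hy => hdis 0 (by omega) x (hE x hx) y (hE y hy))
          (fun x hx => hprec 0 (by omega) x (hE x hx)) hy
      · exact fun y hy =>
          (ih (by omega) (by omega) y (hE y hy)).trans (hprec _ (by omega) y (hE y hy))
    have hsorted' := (hsorted _ (by omega) hi).add_le_of_disjoint (hnodup _ (by omega) hi)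
      (fun y hy => hpos _ hi y (hE y hy)) fun y hy z hz => hdis _ hi y (hE y hy) z (hE z hz)
    exact machineCompl_le _ _ _ hprev hsorted' ((hmem _ (by omega) hi x).2 hx)

end ASAP

section DueDates

variable {k : ℕ} {d p : Fin k → ℕ}

def DueDatesSpaced (d p : Fin k → ℕ) : Prop :=
  ∀ j : Fin k,
    (if j.val = 0 then 0 else d ⟨j.val - 1, lt_of_le_of_lt (Nat.sub_le _ _) j.isLt⟩) + p j ≤
      d j

theorem DueDatesSpaced.le (h : DueDatesSpaced d p) (j : Fin k) : p j ≤ d j :=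
  le_trans (Nat.le_add_left _ _) (h j)

theorem DueDatesSpaced.add_le_of_lt (h : DueDatesSpaced d p) (hd : Monotone d) {l l' : Fin k}
    (hll' : l < l') : d l + p l' ≤ d l' := by
  have hl' := h l'
  rw [if_neg (by omega)] at hl'
  exact le_trans (by gcongr; exact hd (Fin.le_def.2 (by simp; omega))) hl'

theorem dueDatesSpaced_of_disjoint (hd : StrictMono d) (hp : ∀ j, 0 < p j) (S : Fin k → ℕ)
    (hS : ∀ j, S j + p j = d j)
    (hdis : ∀ l l', l ≠ l' → S l + p l ≤ S l' ∨ S l' + p l' ≤ S l) :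
    DueDatesSpaced d p := by
  intro j
  split_ifs with hj
  · simp [← hS j]
  · set i : Fin k := ⟨j.val - 1, lt_of_le_of_lt (Nat.sub_le _ _) j.isLt⟩
    have hij : i < j := Fin.lt_def.2 (by simp [i]; omega)
    have := hd hij
    have := hS i
    have := hS j
    have := hp i
    rcases hdis _ _ hij.ne with h | h <;> omega

end DueDates

section JIT

variable {J : Type} {m : ℕ}

def natIndexed (f : Fin m → J → ℕ) : ℕ → J → ℕ :=
  fun i x => if h : i < m then f ⟨i, h⟩ x else 0

theorem natIndexed_of_lt (f : Fin m → J → ℕ) {i : ℕ} (h : i < m) :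
    natIndexed f i = f ⟨i, h⟩ :=
  funext fun _ => dif_pos h

theorem natIndexed_val (f : Fin m → J → ℕ) (i : Fin m) : natIndexed f i.val = f i :=
  natIndexed_of_lt f i.isLt

def orderLists {k n : ℕ} (e : Fin k ↪ J) (σ : Fin n → Equiv.Perm (Fin k)) : ℕ → List J :=
  fun i => if h : i < n then List.ofFn fun t => e (σ ⟨i, h⟩ t) else []

theorem orderLists_of_lt {k n : ℕ} (e : Fin k ↪ J) (σ : Fin n → Equiv.Perm (Fin k)) {i : ℕ}
    (h : i < n) : orderLists e σ i = List.ofFn fun t => e (σ ⟨i, h⟩ t) :=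
  dif_pos h

theorem mem_orderLists {k n : ℕ} (e : Fin k ↪ J) (σ : Fin n → Equiv.Perm (Fin k)) {i : ℕ}
    (h : i < n) (x : J) : x ∈ orderLists e σ i ↔ x ∈ univ.map e := by
  rw [orderLists_of_lt e σ h, List.mem_ofFn, mem_map]
  exact ⟨fun ⟨t, ht⟩ => ⟨_, mem_univ _, ht⟩,
    fun ⟨l, _, hl⟩ => ⟨(σ ⟨i, h⟩).symm l, by simpa⟩⟩

theorem nodup_orderLists {k n : ℕ} (e : Fin k ↪ J) (σ : Fin n → Equiv.Perm (Fin k)) {i : ℕ}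
    (h : i < n) : (orderLists e σ i).Nodup := by
  rw [orderLists_of_lt e σ h, List.nodup_ofFn]
  exact e.injective.comp (σ _).injective

theorem pairwise_ofFn_sort {k : ℕ} (g : Fin k → J) (S : J → ℕ) :
    (List.ofFn fun t => g (Tuple.sort (fun l => S (g l)) t)).Pairwise fun x y => S x ≤ S y :=
  List.pairwise_ofFn.2 fun _ _ htt => Tuple.monotone_sort (fun l => S (g l)) htt.le

theorem isJITSchedule_of_completion (I : JITInstance m J) (E : Finset J) (K : Fin m → J → ℕ)
    (hp : ∀ i, ∀ x ∈ E, I.p i x ≤ K i x)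
    (hdis : ∀ i, ∀ x ∈ E, ∀ y ∈ E, x ≠ y →
      K i x + I.p i y ≤ K i y ∨ K i y + I.p i x ≤ K i x)
    (hprec : ∀ x ∈ E, ∀ i i' : Fin m, i'.val = i.val + 1 → K i x + I.p i' x ≤ K i' x)
    (hdue : ∀ x ∈ E, ∀ i : Fin m, i.val = m - 1 → K i x = I.d x) :
    IsJITSchedule I E fun i x => K i x - I.p i x := by
  refine ⟨fun i x hx y hy hxy => ?_, fun x hx i i' hii' => ?_, fun x hx i hi => ?_⟩ <;>
    dsimp only
  · have := hp i x hx; have := hp i y hy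
    rcases hdis i x hx y hy hxy with h | h <;> omega
  · have := hp i x hx; have := hp i' x hx; have := hprec x hx i i' hii'
    omega
  · have := hp i x hx; have := hdue x hx i hi
    omega

theorem dueDatesSpaced_of_isJITSchedule {k : ℕ} (hm : 1 ≤ m) (I : JITInstance m J)
    (e : Fin k ↪ J) (hmono : StrictMono fun l => I.d (e l)) {S : Fin m → J → ℕ}
    (hS : IsJITSchedule I (univ.map e) S) :
    DueDatesSpaced (fun l => I.d (e l)) fun l => I.p ⟨m - 1, by omega⟩ (e l) :=
  dueDatesSpaced_of_disjoint hmono (fun _ => I.p_pos _ _) (fun l => S ⟨m - 1, by omega⟩ (e l))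
    (fun l => hS.2.2 _ (mem_map_of_mem e (mem_univ l)) _ rfl)
    fun l l' h => hS.1 _ _ (mem_map_of_mem e (mem_univ l)) _ (mem_map_of_mem e (mem_univ l'))
      (e.injective.ne h)

variable [DecidableEq J]

theorem exists_orders_asapCompl_le (hm : 2 < m) (I : JITInstance m J) {k : ℕ} (e : Fin k ↪ J)
    {S : Fin m → J → ℕ} (hS : IsJITSchedule I (univ.map e) S) :
    ∃ σ : Fin (m - 1) → Equiv.Perm (Fin k), σ ⟨0, by omega⟩ = σ ⟨1, by omega⟩ ∧
      ∀ j, asapCompl (natIndexed I.p) (orderLists e σ) (m - 2) (e j) +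
        I.p ⟨m - 1, by omega⟩ (e j) ≤ I.d (e j) := by
  obtain ⟨hdis, hprec, hdue⟩ := hS
  -- machine `0` copies the order of machine `1`
  let σ : Fin (m - 1) → Equiv.Perm (Fin k) :=
    fun i => Tuple.sort fun l => natIndexed S (max i.val 1) (e l)
  have hσ : ∀ i (hi : i < m - 1), 1 ≤ i → orderLists e σ i =
      List.ofFn fun t => e (Tuple.sort (fun l => natIndexed S i (e l)) t) := by
    intro i hi h1
    rw [orderLists_of_lt e σ hi]
    simp only [σ, max_eq_left h1]
  have hC := asapCompl_le_of_sorted (natIndexed I.p) (orderLists e σ) (n := m - 2)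
    (E := univ.map e) (S := natIndexed S)
    (fun i hi x _ => by
      rw [natIndexed_of_lt I.p (show i < m by omega)]
      exact I.p_pos _ _)
    (fun i hi x hx y hy hxy => by
      rw [natIndexed_of_lt I.p (show i < m by omega), natIndexed_of_lt S (show i < m by omega)]
      exact hdis _ x hx y hy hxy)
    (fun i hi x hx => by
      rw [natIndexed_of_lt I.p (show i < m by omega), natIndexed_of_lt S (show i < m by omega),
        natIndexed_of_lt S (show i + 1 < m by omega)]
      exact hprec x hx _ _ rfl)
    (fun i _ hi => mem_orderLists e σ (by omega))
    (fun i _ hi => nodup_orderLists e σ (by omega))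
    (fun i h1 hi => hσ i (by omega) h1 ▸ pairwise_ofFn_sort e (natIndexed S i))
    (by rw [orderLists_of_lt e σ (show 0 < m - 1 by omega),
      orderLists_of_lt e σ (show 1 < m - 1 by omega)]; rfl)
  refine ⟨σ, rfl, fun j => ?_⟩
  have hj := mem_map_of_mem e (mem_univ j)
  have h1 := hC (m - 2) (by omega) le_rfl (e j) hj
  rw [natIndexed_of_lt S (show m - 2 < m by omega), natIndexed_of_lt I.p (show m - 2 < m by omega)]
    at h1
  have h2 := hprec (e j) hj ⟨m - 2, by omega⟩ ⟨m - 1, by omega⟩ (by simp; omega)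
  have h3 := hdue (e j) hj ⟨m - 1, by omega⟩ rfl
  omega

theorem isJITSchedule_of_asapCompl_le (hm : 2 ≤ m) (I : JITInstance m J) {k : ℕ}
    (e : Fin k ↪ J) (hmono : StrictMono fun l => I.d (e l))
    (σ : Fin (m - 1) → Equiv.Perm (Fin k))
    (ha : DueDatesSpaced (fun l => I.d (e l)) fun l => I.p ⟨m - 1, by omega⟩ (e l))
    (hb : ∀ j, asapCompl (natIndexed I.p) (orderLists e σ) (m - 2) (e j) +
      I.p ⟨m - 1, by omega⟩ (e j) ≤ I.d (e j)) :
    IsJITSchedule I (univ.map e) fun i x =>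
      (if i.val < m - 1 then asapCompl (natIndexed I.p) (orderLists e σ) i x else I.d x) -
        I.p i x := by
  refine isJITSchedule_of_completion I _ _ ?_ ?_ ?_ ?_
  · intro i x hx
    split_ifs with hi
    · exact natIndexed_val I.p i ▸ le_asapCompl _ _ ((mem_orderLists e σ hi x).2 hx)
    · obtain ⟨l, -, rfl⟩ := mem_map.1 hx
      rw [show i = ⟨m - 1, by omega⟩ from Fin.ext (by simp only; omega)]
      exact ha.le l
  · intro i x hx y hy hxy
    split_ifs with hi
    · rw [← natIndexed_val I.p i]
      exact asapCompl_disjoint _ _ (nodup_orderLists e σ hi) ((mem_orderLists e σ hi x).2 hx)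
        ((mem_orderLists e σ hi y).2 hy) hxy
    · obtain ⟨l, -, rfl⟩ := mem_map.1 hx
      obtain ⟨l', -, rfl⟩ := mem_map.1 hy
      rw [show i = ⟨m - 1, by omega⟩ from Fin.ext (by simp only; omega)]
      rcases lt_or_gt_of_ne (e.injective.ne_iff.1 hxy) with h | h
      · exact Or.inl (ha.add_le_of_lt hmono.monotone h)
      · exact Or.inr (ha.add_le_of_lt hmono.monotone h)
  · intro x hx i i' hii'
    rw [if_pos (by omega)]
    split_ifs with hi'
    · rw [← natIndexed_val I.p i', hii']
      exact asapCompl_add_le_succ _ _ ((mem_orderLists e σ (hii' ▸ hi') x).2 hx)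
    · obtain ⟨l, -, rfl⟩ := mem_map.1 hx
      rw [show i' = ⟨m - 1, by omega⟩ from Fin.ext (by simp only; omega),
        show i.val = m - 2 by omega]
      exact hb l
  · intro x hx i hi
    rw [if_neg (by omega)]

end JIT

theorem jit_m_machines_feasibility_iff {m : ℕ} (hm : 3 ≤ m) {J : Type}
    [DecidableEq J] {k' : ℕ} (I : JITInstance m J) (e : Fin k' ↪ J)
    (hmono : StrictMono fun l => I.d (e l)) :
    Feasible I (Finset.univ.map e) ↔
      ((∀ j : Fin k',
          (if j.val = 0 then 0
           else I.d (e ⟨j.val - 1, lt_of_le_of_lt (Nat.sub_le _ _) j.isLt⟩))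
            + I.p ⟨m - 1, by omega⟩ (e j) ≤ I.d (e j)) ∧
       ∃ σ : Fin (m - 1) → Equiv.Perm (Fin k'),
         σ ⟨0, by omega⟩ = σ ⟨1, by omega⟩ ∧
         ∀ j : Fin k',
           asapCompl
             (fun i a => if h : i < m then I.p ⟨i, h⟩ a else 0)
             (fun i => if h : i < m - 1
               then List.ofFn (fun t => e ((σ ⟨i, h⟩) t)) else [])
             (m - 2) (e j)
             + I.p ⟨m - 1, by omega⟩ (e j) ≤ I.d (e j)) := by
  constructor
  · rintro ⟨S, hS⟩
    exact ⟨dueDatesSpaced_of_isJITSchedule (by omega) I e hmono hS,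
      exists_orders_asapCompl_le hm I e hS⟩
  · rintro ⟨ha, σ, -, hb⟩
    exact ⟨_, isJITSchedule_of_asapCompl_le (by omega) I e hmono σ ha hb⟩
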